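/- Twisted periodicity of Q_∞ (from Lemma 4.1 of the paper). Let ν ∈ ℂ with Re ν > 0, and let ψ : (0,∞) → V be continuous and satisfy η(T)ψ(x) = ψ(x+1) + (x+1)^{-2ν-1} η(ST⁻¹) ψ(x/(x+1)) for all x > 0. Then for every x > 0 the series Q_∞(x) := ψ(x) - Σ_{n=1}^{∞} (n+x)^{-2ν-1} η(T'T^{n-1})^{-1} ψ(1 - 1/(n+x)) converges absolutely, and Q_∞(x+1) = η(T) Q_∞(x) for all x > 0. -/

import Mathlib

/-!
Since `η` has finite image and `ψ` is bounded on the compact interval `[x/(1+x), 1]`, which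
contains every argument `1 - 1/(n+x)`, the `n`-th term is `O(n^{-2 Re ν - 1})`.
Applying `η(T)` shifts the series by one index, because `T (T'Tⁿ)⁻¹ = (T'Tⁿ⁻¹)⁻¹`, and turns
its first term into `(x+1)^{-2ν-1} η(ST⁻¹) ψ(x/(x+1))`, because `T T'⁻¹ = S T⁻¹`: this is the
correction term of the Lewis equation, which therefore converts `η(T) Q_∞(x)` into `Q_∞(x+1)`.
-/

open Complex Filter Topology MeasureTheory Set

noncomputable section

abbrev SL2Z := Matrix.SpecialLinearGroup (Fin 2) ℤ

def Smat : SL2Z := ⟨!![0, 1; -1, 0], by decide⟩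
def Tmat : SL2Z := ⟨!![1, 1; 0, 1], by decide⟩
def Tpmat : SL2Z := ⟨!![1, 0; 1, 1], by decide⟩
def negI : SL2Z := ⟨!![-1, 0; 0, -1], by decide⟩

variable {V : Type} [NormedAddCommGroup V] [NormedSpace ℂ V]

/-- The term of index `n+1` of the series defining `Q_∞`:
`(n+1+x)^{-2ν-1} η(T'Tⁿ)⁻¹ ψ(1 - 1/(n+1+x))` (i.e. the series
`Σ_{m≥1} (m+x)^{-2ν-1} η(T'T^{m-1})⁻¹ ψ(1 - 1/(m+x))` reindexed by `m = n+1`). -/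
def QInftyTerm (ν : ℂ) (η : SL2Z →* (V →ₗ[ℂ] V)ˣ) (ψ : ℝ → V) (x : ℝ) (n : ℕ) : V :=
  ((((n : ℝ) + 1 + x : ℝ) : ℂ) ^ (-2 * ν - 1)) •
    (η (Tpmat * Tmat ^ n)⁻¹ : V →ₗ[ℂ] V) (ψ (1 - 1 / ((n : ℝ) + 1 + x)))

/-- `Q_∞(x) = ψ(x) - Σ_{n≥1} (n+x)^{-2ν-1} η(T'T^{n-1})⁻¹ ψ(1 - 1/(n+x))`. -/
def QInfty [FiniteDimensional ℂ V] (ν : ℂ) (η : SL2Z →* (V →ₗ[ℂ] V)ˣ) (ψ : ℝ → V)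
    (x : ℝ) : V :=
  ψ x - ∑' n : ℕ, QInftyTerm ν η ψ x n

lemma Tmat_mul_inv_Tpmat_mul_Tmat_pow_succ (n : ℕ) :
    Tmat * (Tpmat * Tmat ^ (n + 1))⁻¹ = (Tpmat * Tmat ^ n)⁻¹ := by
  rw [pow_succ]; group

lemma Tmat_mul_Tpmat_inv : Tmat * Tpmat⁻¹ = Smat * Tmat⁻¹ := by
  rw [Matrix.SpecialLinearGroup.SL2_inv_expl, Matrix.SpecialLinearGroup.SL2_inv_expl]
  ext i j
  fin_cases i <;> fin_cases j <;> rfl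

lemma exists_forall_norm_apply_le_of_finite {𝕜 E F : Type*} [NontriviallyNormedField 𝕜]
    [CompleteSpace 𝕜] [NormedAddCommGroup E] [NormedSpace 𝕜 E] [FiniteDimensional 𝕜 E]
    [NormedAddCommGroup F] [NormedSpace 𝕜 F] {S : Set (E →ₗ[𝕜] F)} (hS : S.Finite) :
    ∃ C, 0 ≤ C ∧ ∀ A ∈ S, ∀ v, ‖A v‖ ≤ C * ‖v‖ := by
  obtain ⟨C, hC⟩ := (hS.image fun A => ‖LinearMap.toContinuousLinearMap A‖).bddAbove
  refine ⟨max C 0, le_max_right _ _, fun A hA v => ?_⟩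
  calc ‖A v‖ = ‖LinearMap.toContinuousLinearMap A v‖ := rfl
    _ ≤ ‖LinearMap.toContinuousLinearMap A‖ * ‖v‖ := ContinuousLinearMap.le_opNorm _ _
    _ ≤ max C 0 * ‖v‖ := by
      gcongr
      exact (hC ⟨A, hA, rfl⟩).trans (le_max_left _ _)

lemma summable_norm_cpow_smul_of_norm_le {s : ℂ} (hs : s.re < -1) {x : ℝ} (hx : 0 ≤ x)
    {w : ℕ → V} {B : ℝ} (hw : ∀ n, ‖w n‖ ≤ B) :
    Summable fun n : ℕ => ‖((((n : ℝ) + 1 + x : ℝ) : ℂ) ^ s) • w n‖ := by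
  have hcmp : Summable fun n : ℕ => ((n : ℝ) + 1) ^ s.re * B := by
    refine Summable.mul_right B ?_
    exact_mod_cast (summable_nat_add_iff 1).mpr (Real.summable_nat_rpow.mpr hs)
  refine Summable.of_nonneg_of_le (fun _ => norm_nonneg _) (fun n => ?_) hcmp
  rw [norm_smul, norm_cpow_eq_rpow_re_of_pos (by positivity)]
  exact mul_le_mul (Real.rpow_le_rpow_of_nonpos (by positivity) (by linarith) (by linarith))
    (hw n) (norm_nonneg _) (by positivity)

lemma summable_norm_QInftyTerm [FiniteDimensional ℂ V] {η : SL2Z →* (V →ₗ[ℂ] V)ˣ}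
    (hηfin : (range η).Finite) {ν : ℂ} (hν : 0 < ν.re) {ψ : ℝ → V}
    (hψc : ContinuousOn ψ (Ioi 0)) {x : ℝ} (hx : 0 < x) :
    Summable fun n : ℕ => ‖QInftyTerm ν η ψ x n‖ := by
  obtain ⟨C, hC0, hC⟩ := exists_forall_norm_apply_le_of_finite (hηfin.image Units.val)
  have hK : Icc (1 - 1 / (1 + x)) 1 ⊆ Ioi 0 := fun y hy =>
    lt_of_lt_of_le (by rw [sub_pos, div_lt_one (by linarith)]; linarith) hy.1
  obtain ⟨M, hM⟩ := isCompact_Icc.exists_bound_of_continuousOn (hψc.mono hK)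
  have harg (n : ℕ) : 1 - 1 / ((n : ℝ) + 1 + x) ∈ Icc (1 - 1 / (1 + x)) 1 :=
    ⟨by gcongr; linarith [n.cast_nonneg (α := ℝ)], by simp only [sub_le_self_iff]; positivity⟩
  refine summable_norm_cpow_smul_of_norm_le (by simp; linarith) hx.le (B := C * M) fun n => ?_
  exact (hC _ ⟨_, mem_range_self _, rfl⟩ _).trans (by gcongr; exact hM _ (harg n))

lemma Tmat_apply_QInftyTerm_succ (η : SL2Z →* (V →ₗ[ℂ] V)ˣ) (ν : ℂ) (ψ : ℝ → V) (x : ℝ)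
    (n : ℕ) :
    (η Tmat : V →ₗ[ℂ] V) (QInftyTerm ν η ψ x (n + 1)) = QInftyTerm ν η ψ (x + 1) n := by
  rw [QInftyTerm, QInftyTerm, LinearMap.map_smul, ← Module.End.mul_apply, ← Units.val_mul,
    ← map_mul, Tmat_mul_inv_Tpmat_mul_Tmat_pow_succ]
  have hshift : ((n + 1 : ℕ) : ℝ) + 1 + x = n + 1 + (x + 1) := by push_cast; ring
  rw [hshift]

lemma Tmat_apply_QInftyTerm_zero (η : SL2Z →* (V →ₗ[ℂ] V)ˣ) (ν : ℂ) (ψ : ℝ → V) {x : ℝ}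
    (hx : x + 1 ≠ 0) :
    (η Tmat : V →ₗ[ℂ] V) (QInftyTerm ν η ψ x 0) =
      (((x + 1 : ℝ) : ℂ) ^ (-2 * ν - 1)) • (η (Smat * Tmat⁻¹) : V →ₗ[ℂ] V) (ψ (x / (x + 1))) := by
  rw [QInftyTerm, LinearMap.map_smul, ← Module.End.mul_apply, ← Units.val_mul, ← map_mul,
    pow_zero, mul_one, Tmat_mul_Tpmat_inv, Nat.cast_zero, zero_add, add_comm 1 x,
    one_sub_div hx, add_sub_cancel_right]

theorem QInfty_twisted_periodicity_general [FiniteDimensional ℂ V]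
    (η : SL2Z →* (V →ₗ[ℂ] V)ˣ) (hηfin : (Set.range η).Finite)
    (ν : ℂ) (hν : 0 < ν.re)
    (ψ : ℝ → V) (hψc : ContinuousOn ψ (Set.Ioi 0))
    (hlewis : ∀ x : ℝ, 0 < x →
      (η Tmat : V →ₗ[ℂ] V) (ψ x) =
        ψ (x + 1) + (((x + 1 : ℝ) : ℂ) ^ (-2 * ν - 1)) •
          (η (Smat * Tmat⁻¹) : V →ₗ[ℂ] V) (ψ (x / (x + 1)))) :
    (∀ x : ℝ, 0 < x → Summable fun n : ℕ => ‖QInftyTerm ν η ψ x n‖) ∧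
    (∀ x : ℝ, 0 < x →
      QInfty ν η ψ (x + 1) = (η Tmat : V →ₗ[ℂ] V) (QInfty ν η ψ x)) := by
  refine ⟨fun x hx => summable_norm_QInftyTerm hηfin hν hψc hx, fun x hx => ?_⟩
  let A := LinearMap.toContinuousLinearMap (η Tmat : V →ₗ[ℂ] V)
  have hsx := (summable_norm_QInftyTerm hηfin hν hψc hx).of_norm
  have hA : A (∑' n, QInftyTerm ν η ψ x n) =
      A (QInftyTerm ν η ψ x 0) + ∑' n, QInftyTerm ν η ψ (x + 1) n := by
    rw [hsx.tsum_eq_zero_add, map_add, A.map_tsum ((summable_nat_add_iff 1).mpr hsx)]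
    simp only [A, LinearMap.coe_toContinuousLinearMap', Tmat_apply_QInftyTerm_succ]
  calc QInfty ν η ψ (x + 1)
      = A (ψ x) - A (QInftyTerm ν η ψ x 0) - ∑' n, QInftyTerm ν η ψ (x + 1) n := by
        rw [QInfty, LinearMap.coe_toContinuousLinearMap', hlewis x hx,
          Tmat_apply_QInftyTerm_zero η ν ψ (by linarith)]
        abel
    _ = (η Tmat : V →ₗ[ℂ] V) (QInfty ν η ψ x) := by
        rw [sub_sub, ← hA, ← map_sub]
        rfl

/-- **Twisted periodicity of `Q_∞`** (from Lemma 4.1 of the paper): for `Re ν > 0` and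
`ψ : (0,∞) → V` continuous satisfying the real Lewis equation, the series defining
`Q_∞(x)` converges absolutely for every `x > 0` and `Q_∞(x+1) = η(T) Q_∞(x)`. -/
theorem QInfty_twisted_periodicity [FiniteDimensional ℂ V] [Nontrivial V]
    (η : SL2Z →* (V →ₗ[ℂ] V)ˣ) (hη1 : η negI = 1) (hηfin : (Set.range η).Finite)
    (ν : ℂ) (hν : 0 < ν.re)
    (ψ : ℝ → V) (hψc : ContinuousOn ψ (Set.Ioi 0))
    (hlewis : ∀ x : ℝ, 0 < x →
      (η Tmat : V →ₗ[ℂ] V) (ψ x) =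
        ψ (x + 1) + (((x + 1 : ℝ) : ℂ) ^ (-2 * ν - 1)) •
          (η (Smat * Tmat⁻¹) : V →ₗ[ℂ] V) (ψ (x / (x + 1)))) :
    (∀ x : ℝ, 0 < x → Summable fun n : ℕ => ‖QInftyTerm ν η ψ x n‖) ∧
    (∀ x : ℝ, 0 < x →
      QInfty ν η ψ (x + 1) = (η Tmat : V →ₗ[ℂ] V) (QInfty ν η ψ x)) :=
  QInfty_twisted_periodicity_general η hηfin ν hν ψ hψc hlewis

end
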